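/- Let ω be a unit of R. Then there exists a K-linear map ε : R → K with ε(ω) = 0 and ε(ω·α) = 1, and for any such ε the pair (Δ_ω, ε) is a Frobenius structure on R; more precisely: (i) Δ_ω(u·v) = (u ⊗ 1)·Δ_ω(v) and Δ_ω(u·v) = Δ_ω(u)·(1 ⊗ v) for all u, v ∈ R (products taken in the K-algebra R ⊗[K] R); (ii) applying id ⊗ ε to Δ_ω(u) gives u, and applying ε ⊗ id to Δ_ω(u) gives u, for all u ∈ R (after identifying R ⊗[K] K and K ⊗[K] R with R); and (iii) Δ_ω is coassociative: (Δ_ω ⊗ id) ∘ Δ_ω and (id ⊗ Δ_ω) ∘ Δ_ω agree under the associativity isomorphism (R ⊗ R) ⊗ R ≅ R ⊗ (R ⊗ R). -/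

import Mathlib

open Polynomial TensorProduct

noncomputable section

variable {K : Type*} [CommRing K]

/-- The quadratic `K`-algebra `K[X]/(X² - s·X + p)`. -/
abbrev Quad (s p : K) : Type _ := AdjoinRoot (X ^ 2 - C s * X + C p)

/-- The image of `X`, i.e. the generator `α`. -/
def qα (s p : K) : Quad s p := AdjoinRoot.root _

lemma quad_aeval_root (s p : K) :
    (aeval (qα s p)) (X ^ 2 - C s * X + C p) = 0 := by
  simp [qα, AdjoinRoot.aeval_eq, AdjoinRoot.mk_self]

/-- The involution `σ` of the quadratic algebra, with `σ α = s - α`. -/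
def qσ (s p : K) : Quad s p →ₐ[K] Quad s p :=
  AdjoinRoot.liftAlgHom _ (Algebra.ofId K (Quad s p)) (algebraMap K (Quad s p) s - qα s p) (show
    aeval (algebraMap K (Quad s p) s - qα s p) (X ^ 2 - C s * X + C p) = 0 by
    have h := quad_aeval_root s p
    simp only [map_add, map_sub, map_mul, map_pow, aeval_X, aeval_C] at h ⊢
    linear_combination h)

/-- The coproduct `Δ_ω : u ↦ u ⊗ (ω·α) - (u·σ(α)) ⊗ ω`, as a `K`-linear map. -/
def qΔ (s p : K) (w : Quad s p) : Quad s p →ₗ[K] Quad s p ⊗[K] Quad s p :=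
  (TensorProduct.mk K (Quad s p) (Quad s p)).flip (w * qα s p)
    - ((TensorProduct.mk K (Quad s p) (Quad s p)).flip w).comp
        (LinearMap.mulRight K (qσ s p (qα s p)))

/-! The element `Δ_ω(1)` is balanced, `(v ⊗ 1)·Δ_ω(1) = Δ_ω(1)·(1 ⊗ v)`: the `v` with this
property form a subalgebra, which contains `α` because `α·σ(α) = p` and `α² = s·α - p`. Since
`Δ_ω(u) = (u ⊗ 1)·Δ_ω(1)`, both Frobenius relations follow. Writing `u = ω·(ω⁻¹u)`, the right
Frobenius relation reduces the counit law `(ε ⊗ id) ∘ Δ_ω = id` to the single value `u = ω`.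
Coassociativity is a direct computation with the same two relations. -/

lemma TensorProduct.lid_rTensor_mul_one_tmul {R A B : Type*} [CommSemiring R] [Semiring A]
    [Algebra R A] [Semiring B] [Algebra R B] (ε : A →ₗ[R] R) (x : A ⊗[R] B) (y : B) :
    TensorProduct.lid R B (ε.rTensor B (x * (1 ⊗ₜ y)))
      = TensorProduct.lid R B (ε.rTensor B x) * y := by
  induction x using TensorProduct.induction_on with
  | zero => simp
  | tmul a b => simp
  | add x x' hx hx' => rw [add_mul, map_add, map_add, hx, hx', map_add, map_add, add_mul]

namespace Quad

variable {s p : K}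

lemma qσ_qα : qσ s p (qα s p) = algebraMap K (Quad s p) s - qα s p :=
  AdjoinRoot.liftAlgHom_root _ _ _ _

lemma qα_sq : qα s p ^ 2 = algebraMap K (Quad s p) s * qα s p - algebraMap K (Quad s p) p := by
  have h := quad_aeval_root s p
  simp only [map_add, map_sub, map_mul, map_pow, aeval_X, aeval_C] at h
  linear_combination h

lemma qα_mul_qσ_qα : qα s p * qσ s p (qα s p) = algebraMap K (Quad s p) p := by
  rw [qσ_qα]
  linear_combination -(qα_sq (s := s) (p := p))

lemma exists_coord_qα : ∃ f : Quad s p →ₗ[K] K, f 1 = 0 ∧ f (qα s p) = 1 := by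
  nontriviality K
  have hm : (X ^ 2 - C s * X + C p).Monic := by monicity!
  have hdeg : (X ^ 2 - C s * X + C p).natDegree = 2 := by compute_degree!
  let pb := AdjoinRoot.powerBasis' hm
  have hbasis (i : Fin pb.dim) : pb.basis i = qα s p ^ (i : ℕ) := by
    rw [pb.coe_basis]; rfl
  refine ⟨pb.basis.coord ⟨1, by simp [pb, hdeg]⟩, ?_, ?_⟩
  · rw [← pow_zero (qα s p), ← hbasis ⟨0, by simp [pb, hdeg]⟩, pb.basis.coord_apply,
      pb.basis.repr_self, Finsupp.single_apply]
    simp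
  · rw [← pow_one (qα s p), ← hbasis ⟨1, by simp [pb, hdeg]⟩, pb.basis.coord_apply,
      pb.basis.repr_self, Finsupp.single_eq_same]

lemma qΔ_apply (w u : Quad s p) :
    qΔ s p w u = u ⊗ₜ[K] (w * qα s p) - (u * qσ s p (qα s p)) ⊗ₜ[K] w := rfl

lemma qΔ_mul_left (w u v : Quad s p) :
    qΔ s p w (u * v) = (u ⊗ₜ[K] (1 : Quad s p)) * qΔ s p w v := by
  simp only [qΔ_apply, mul_sub, Algebra.TensorProduct.tmul_mul_tmul, one_mul, mul_assoc]

lemma qΔ_eq_tmul_one_mul (w u : Quad s p) :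
    qΔ s p w u = (u ⊗ₜ[K] (1 : Quad s p)) * qΔ s p w 1 := by
  simpa using qΔ_mul_left w u 1

lemma tmul_one_mul_qΔ_one (w v : Quad s p) :
    (v ⊗ₜ[K] (1 : Quad s p)) * qΔ s p w 1 = qΔ s p w 1 * ((1 : Quad s p) ⊗ₜ[K] v) := by
  have hv : v ∈ Algebra.adjoin K {qα s p} := by
    rw [qα, AdjoinRoot.adjoinRoot_eq_top]
    exact Algebra.mem_top
  induction hv using Algebra.adjoin_induction with
  | mem x hx =>
    rw [Set.mem_singleton_iff.mp hx, ← qΔ_eq_tmul_one_mul, qΔ_apply, qΔ_apply, qα_mul_qσ_qα,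
      one_mul, sub_mul, Algebra.TensorProduct.tmul_mul_tmul, Algebra.TensorProduct.tmul_mul_tmul,
      one_mul, mul_one, mul_assoc, ← sq, qα_sq, qσ_qα]
    simp only [Algebra.algebraMap_eq_smul_one, smul_mul_assoc, one_mul, mul_sub, tmul_sub,
      sub_tmul, mul_smul_comm, mul_one, ← smul_tmul', tmul_smul]
    module
  | algebraMap r =>
    rw [← Algebra.TensorProduct.algebraMap_apply, ← Algebra.TensorProduct.algebraMap_apply',
      Algebra.commutes]
  | add x y _ _ hx hy => rw [add_tmul, tmul_add, add_mul, mul_add, hx, hy]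
  | mul x y _ _ hx hy =>
    have hleft : (x * y) ⊗ₜ[K] (1 : Quad s p) = (x ⊗ₜ[K] 1) * (y ⊗ₜ[K] 1) := by
      rw [Algebra.TensorProduct.tmul_mul_tmul, one_mul]
    have hright : (1 : Quad s p) ⊗ₜ[K] (x * y) = (1 ⊗ₜ[K] x) * (1 ⊗ₜ[K] y) := by
      rw [Algebra.TensorProduct.tmul_mul_tmul, one_mul]
    rw [hleft, hright, mul_assoc, hy, ← mul_assoc, hx, mul_assoc]

lemma qΔ_mul_right (w u v : Quad s p) :
    qΔ s p w (u * v) = qΔ s p w u * ((1 : Quad s p) ⊗ₜ[K] v) := by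
  rw [qΔ_mul_left, qΔ_eq_tmul_one_mul w v, tmul_one_mul_qΔ_one, ← mul_assoc,
    ← qΔ_eq_tmul_one_mul]

lemma rid_lTensor_qΔ (w : Quad s p) {ε : Quad s p →ₗ[K] K} (hw : ε w = 0)
    (hwα : ε (w * qα s p) = 1) (u : Quad s p) :
    TensorProduct.rid K (Quad s p) (ε.lTensor (Quad s p) (qΔ s p w u)) = u := by
  simp [qΔ_apply, hw, hwα]

lemma lid_rTensor_qΔ_self (w : Quad s p) {ε : Quad s p →ₗ[K] K} (hw : ε w = 0)
    (hwα : ε (w * qα s p) = 1) :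
    TensorProduct.lid K (Quad s p) (ε.rTensor (Quad s p) (qΔ s p w w)) = w := by
  have hwσα : ε (w * qσ s p (qα s p)) = -1 := by
    rw [qσ_qα, mul_sub, map_sub, hwα, ← Algebra.commutes, ← Algebra.smul_def, map_smul, hw,
      smul_zero, zero_sub]
  simp [qΔ_apply, hw, hwσα]

lemma lid_rTensor_qΔ (ω : (Quad s p)ˣ) {ε : Quad s p →ₗ[K] K} (hω : ε ω = 0)
    (hωα : ε (ω * qα s p) = 1) (u : Quad s p) :
    TensorProduct.lid K (Quad s p) (ε.rTensor (Quad s p) (qΔ s p ω u)) = u := by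
  rw [← ω.mul_inv_cancel_left u, qΔ_mul_right, lid_rTensor_mul_one_tmul,
    lid_rTensor_qΔ_self _ hω hωα]

lemma assoc_rTensor_qΔ_qΔ (w u : Quad s p) :
    TensorProduct.assoc K (Quad s p) (Quad s p) (Quad s p)
        ((qΔ s p w).rTensor (Quad s p) (qΔ s p w u))
      = (qΔ s p w).lTensor (Quad s p) (qΔ s p w u) := by
  have hββ : u * (qσ s p (qα s p) * qσ s p (qα s p)) = s • (u * qσ s p (qα s p)) - p • u := by
    simp only [Algebra.smul_def, qσ_qα]
    linear_combination u * qα_sq (s := s) (p := p)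
  have hwβ : w * qσ s p (qα s p) = s • w - w * qα s p := by
    rw [qσ_qα, mul_sub, ← Algebra.commutes, ← Algebra.smul_def]
  simp only [qΔ_apply, map_sub, LinearMap.rTensor_tmul, LinearMap.lTensor_tmul, assoc_tmul,
    sub_tmul, tmul_sub, mul_assoc, qα_mul_qσ_qα, ← Algebra.commutes, ← Algebra.smul_def, hββ, hwβ,
    tmul_smul, ← smul_tmul', map_smul]
  module

lemma exists_map_eq_zero_map_mul_qα_eq_one (ω : (Quad s p)ˣ) :
    ∃ ε : Quad s p →ₗ[K] K, ε ω = 0 ∧ ε (ω * qα s p) = 1 := by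
  obtain ⟨f, hf1, hfα⟩ := exists_coord_qα (s := s) (p := p)
  exact ⟨f ∘ₗ LinearMap.mulLeft K ↑ω⁻¹, by simpa using hf1, by simpa [← mul_assoc] using hfα⟩

end Quad

/-- For any unit `ω` there is a `K`-linear counit `ε` with `ε ω = 0`, `ε (ω·α) = 1`,
and for any such `ε` the pair `(Δ_ω, ε)` is a Frobenius structure (Frobenius relations,
both counit laws, and coassociativity). -/
theorem stmt2 (s p : K) (ω : (Quad s p)ˣ) :
    (∃ ε : Quad s p →ₗ[K] K,
        ε (ω : Quad s p) = 0 ∧ ε ((ω : Quad s p) * qα s p) = 1) ∧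
    (∀ u v : Quad s p,
        qΔ s p (ω : Quad s p) (u * v)
          = (u ⊗ₜ[K] (1 : Quad s p)) * qΔ s p (ω : Quad s p) v ∧
        qΔ s p (ω : Quad s p) (u * v)
          = qΔ s p (ω : Quad s p) u * ((1 : Quad s p) ⊗ₜ[K] v)) ∧
    (∀ ε : Quad s p →ₗ[K] K,
        ε (ω : Quad s p) = 0 → ε ((ω : Quad s p) * qα s p) = 1 →
        ∀ u : Quad s p,
          (TensorProduct.rid K (Quad s p))
            ((LinearMap.lTensor (Quad s p) ε) (qΔ s p (ω : Quad s p) u)) = u ∧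
          (TensorProduct.lid K (Quad s p))
            ((LinearMap.rTensor (Quad s p) ε) (qΔ s p (ω : Quad s p) u)) = u) ∧
    (∀ u : Quad s p,
        (TensorProduct.assoc K (Quad s p) (Quad s p) (Quad s p))
            ((LinearMap.rTensor (Quad s p) (qΔ s p (ω : Quad s p)))
              (qΔ s p (ω : Quad s p) u))
          = (LinearMap.lTensor (Quad s p) (qΔ s p (ω : Quad s p)))
              (qΔ s p (ω : Quad s p) u)) :=
  ⟨Quad.exists_map_eq_zero_map_mul_qα_eq_one ω,
    fun u v => ⟨Quad.qΔ_mul_left _ u v, Quad.qΔ_mul_right _ u v⟩,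
    fun _ hω hωα u => ⟨Quad.rid_lTensor_qΔ _ hω hωα u, Quad.lid_rTensor_qΔ ω hω hωα u⟩,
    Quad.assoc_rTensor_qΔ_qΔ _⟩

end
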